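/- The semi-implicit update u = (M + τA)⁻¹ M ǔ (with zero reaction) is ℓ∞-stable: if A has nonpositive off-diagonal entries, zero row sums, and M is diagonal with positive entries, then min_j ǔ_j ≤ u_i ≤ max_j ǔ_j for all i. -/

import Mathlib

/-!
Write the step row by row as `M i i * u i + τ * (A *ᵥ u) i = M i i * ǔ i`. At an index where `u`
is maximal, `(A *ᵥ u) i = ∑ j, A i j * (u j - u i)` is a sum of products of two nonpositive
numbers, hence nonnegative, so `u i ≤ ǔ i ≤ max ǔ`. Applying this to `-u` gives the lower bound.
-/

open Finset Matrix

namespace Matrix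

theorem IsDiag.mulVec_apply {ι α : Type*} [Fintype ι] [DecidableEq ι]
    [NonUnitalNonAssocSemiring α] {M : Matrix ι ι α} (hM : M.IsDiag) (v : ι → α) (i : ι) :
    (M *ᵥ v) i = M i i * v i := by
  rw [← hM.diagonal_diag, mulVec_diagonal, diagonal_apply_eq]

variable {ι R : Type*} [Fintype ι] [Field R] [LinearOrder R] [IsStrictOrderedRing R]

theorem mulVec_apply_nonneg_of_forall_le {A : Matrix ι ι R} {u : ι → R} {i : ι}
    (hAoff : ∀ j, i ≠ j → A i j ≤ 0) (hArow : ∑ j, A i j = 0) (hmax : ∀ j, u j ≤ u i) :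
    0 ≤ (A *ᵥ u) i := by
  have hshift : (A *ᵥ u) i = ∑ j, A i j * (u j - u i) := by
    simp only [mulVec, dotProduct, mul_sub, sum_sub_distrib, ← sum_mul, hArow, zero_mul,
      sub_zero]
  rw [hshift]
  refine sum_nonneg fun j _ => ?_
  rcases eq_or_ne i j with rfl | hij
  · simp
  · exact mul_nonneg_of_nonpos_of_nonpos (hAoff j hij) (sub_nonpos.mpr (hmax j))

variable [DecidableEq ι] {M A : Matrix ι ι R} {τ : R} {u uPrev : ι → R} {i : ι}

theorem IsDiag.apply_le_of_add_smul_mulVec_eq (hM : M.IsDiag) (hMi : 0 < M i i) (hτ : 0 ≤ τ)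
    (hAoff : ∀ j, i ≠ j → A i j ≤ 0) (hArow : ∑ j, A i j = 0)
    (hstep : (M + τ • A) *ᵥ u = M *ᵥ uPrev) (hmax : ∀ j, u j ≤ u i) :
    u i ≤ uPrev i := by
  have hrow : M i i * u i + τ * (A *ᵥ u) i = M i i * uPrev i := by
    simpa only [add_mulVec, smul_mulVec, Pi.add_apply, Pi.smul_apply, smul_eq_mul,
      hM.mulVec_apply] using congrFun hstep i
  have hAu : 0 ≤ τ * (A *ᵥ u) i :=
    mul_nonneg hτ (mulVec_apply_nonneg_of_forall_le hAoff hArow hmax)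
  exact le_of_mul_le_mul_left (by linarith) hMi

theorem IsDiag.le_apply_of_add_smul_mulVec_eq (hM : M.IsDiag) (hMi : 0 < M i i) (hτ : 0 ≤ τ)
    (hAoff : ∀ j, i ≠ j → A i j ≤ 0) (hArow : ∑ j, A i j = 0)
    (hstep : (M + τ • A) *ᵥ u = M *ᵥ uPrev) (hmin : ∀ j, u i ≤ u j) :
    uPrev i ≤ u i := by
  have hstep' : (M + τ • A) *ᵥ (-u) = M *ᵥ (-uPrev) := by rw [mulVec_neg, mulVec_neg, hstep]
  simpa using hM.apply_le_of_add_smul_mulVec_eq hMi hτ hAoff hArow hstep' (by simpa using hmin)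

end Matrix

theorem semi_implicit_max_principle (n : ℕ)
    (hne : (Finset.univ : Finset (Fin n)).Nonempty)
    (τ : ℝ) (hτ : 0 < τ)
    (M A : Matrix (Fin n) (Fin n) ℝ)
    (hMdiag : ∀ i j, i ≠ j → M i j = 0) (hMpos : ∀ i, 0 < M i i)
    (hAoff : ∀ i j, i ≠ j → A i j ≤ 0)
    (hArow : ∀ i, ∑ j, A i j = 0)
    (u uPrev : Fin n → ℝ)
    (hstep : (M + τ • A).mulVec u = M.mulVec uPrev) :
    ∀ i, Finset.univ.inf' hne uPrev ≤ u i ∧ u i ≤ Finset.univ.sup' hne uPrev := by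
  have hM : M.IsDiag := hMdiag
  obtain ⟨imax, -, hmax⟩ := exists_max_image univ u hne
  obtain ⟨imin, -, hmin⟩ := exists_min_image univ u hne
  intro i
  constructor
  · calc univ.inf' hne uPrev ≤ uPrev imin := inf'_le _ (mem_univ _)
      _ ≤ u imin := hM.le_apply_of_add_smul_mulVec_eq (hMpos imin) hτ.le (hAoff imin)
          (hArow imin) hstep fun j => hmin j (mem_univ j)
      _ ≤ u i := hmin i (mem_univ i)
  · calc u i ≤ u imax := hmax i (mem_univ i)
      _ ≤ uPrev imax := hM.apply_le_of_add_smul_mulVec_eq (hMpos imax) hτ.le (hAoff imax)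
          (hArow imax) hstep fun j => hmax j (mem_univ j)
      _ ≤ univ.sup' hne uPrev := le_sup' _ (mem_univ _)
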